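/- arXiv:0711.1738 — 2 statements merged into one kernel-verified Lean document; each statement's English description precedes it below -/
import Mathlib

section
/- Let ℓ, a, b be nonnegative integers and let λ ∈ ℚ. If ℓ > a + b, then F_{ℓ,a,b}(λ) = 0. If ℓ ≤ a + b, then F_{ℓ,a,b}(λ) = (−1)^ℓ · b! / (ℓ!·(a+b−ℓ)!) · Q_{ℓ,a}(b,λ). Moreover, for fixed ℓ, a and λ, the map b ↦ Q_{ℓ,a}(b,λ) is a polynomial function of b of degree a whose coefficient of b^a equals (λ−1)^ℓ. -/
/-- Falling factorial `x(x-1)⋯(x-n+1)` in `ℚ`. -/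
def ffall (x : ℚ) (n : ℕ) : ℚ := ∏ i ∈ Finset.range n, (x - (i : ℚ))

/-- Generalized binomial coefficient: `C(x, n) = x(x-1)⋯(x-n+1)/n!` for `n ≥ 0`,
and `C(x, n) = 0` for `n < 0`. -/
def gchoose (x : ℚ) (n : ℤ) : ℚ :=
  if 0 ≤ n then ffall x n.toNat / ((n.toNat).factorial : ℚ) else 0

/-- `F_{ℓ,a,b}(λ) = ∑_{r=0}^{ℓ} λ^r C(ℓ-a-b-1, r) C(b, ℓ-r)`, where the first
binomial is generalized (its top may be negative) and the second ordinary. -/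
def Ffun (l a b : ℕ) (lam : ℚ) : ℚ :=
  ∑ r ∈ Finset.range (l + 1),
    lam ^ r * gchoose ((l : ℚ) - a - b - 1) r * (b.choose (l - r) : ℚ)

/-- `Q_{ℓ,a}(b,λ) = ∑_{m=0}^{min(a,ℓ)} C(a,m) ((a+b-ℓ)↓(a-m)) (ℓ↓m) λ^m (λ-1)^(ℓ-m)`. -/
def Qfun (l a : ℕ) (b lam : ℚ) : ℚ :=
  ∑ m ∈ Finset.range (min a l + 1),
    (a.choose m : ℚ) * ffall ((a : ℚ) + b - l) (a - m) * ffall (l : ℚ) m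
      * lam ^ m * (lam - 1) ^ (l - m)

/-!
For `l ≤ a + b` put `n = a + b - l`. Then `C(l-a-b-1, r) = (-1)^r C(n+r, r)`, and Vandermonde's
identity, splitting off the `l - r` elements chosen among the `b`, gives
`C(n+r, r) C(b, l-r) = ∑_m C(a,m) C(b,l-m) C(l-m, r-m)`. Summing over `r` first, the binomial
theorem collapses `∑_r (-λ)^r C(l-m, r-m)` to `(-λ)^m (1-λ)^(l-m)`, so
`F = (-1)^l ∑_m C(a,m) C(b,l-m) λ^m (λ-1)^(l-m)`, and the factorials in front of `Q` turn its
terms into exactly these. For `l > a + b` the top `l-a-b-1` is a natural number and every term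
of `F` vanishes. In `b`, the `m`-th term of `Q` has degree `a - m`, so only `m = 0` reaches `b^a`.
-/

open Finset Polynomial
open scoped Nat

lemma ffall_eq_eval_descPochhammer (x : ℚ) (n : ℕ) : ffall x n = (descPochhammer ℚ n).eval x :=
  (descPochhammer_eval_eq_prod_range n x).symm

lemma ffall_natCast (c n : ℕ) : ffall c n = c.descFactorial n := by
  rw [ffall_eq_eval_descPochhammer, descPochhammer_eval_eq_descFactorial]

lemma gchoose_natCast (x : ℚ) (r : ℕ) : gchoose x r = ffall x r / r ! := by
  simp [gchoose]

lemma gchoose_natCast_natCast (c r : ℕ) : gchoose c r = c.choose r := by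
  rw [gchoose_natCast, ffall_eq_eval_descPochhammer, Nat.cast_choose_eq_descPochhammer_div]

lemma gchoose_neg_natCast_sub_one (n r : ℕ) :
    gchoose (-n - 1) r = (-1) ^ r * (n + r).choose r := by
  have hasc := ascPochhammer_eval_neg_eq_descPochhammer ℚ (-n - 1) r
  rw [show -(-n - 1 : ℚ) = ((n + r : ℕ) : ℚ) - r + 1 by push_cast; ring,
    ← descPochhammer_eval_eq_ascPochhammer] at hasc
  rw [gchoose_natCast, ffall_eq_eval_descPochhammer, Nat.cast_choose_eq_descPochhammer_div, hasc,
    mul_div_assoc', ← mul_assoc, ← mul_pow, neg_one_mul, neg_neg, one_pow, one_mul]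

lemma Ffun_eq_zero_of_lt {l a b : ℕ} (lam : ℚ) (h : a + b < l) : Ffun l a b lam = 0 := by
  have htop : (l : ℚ) - a - b - 1 = (l - (a + b + 1) : ℕ) := by
    rw [Nat.cast_sub (by omega)]; push_cast; ring
  refine sum_eq_zero fun r _ => ?_
  rw [htop, gchoose_natCast_natCast]
  rcases le_or_gt r (l - (a + b + 1)) with hr' | hr'
  · rw [Nat.choose_eq_zero_of_lt (show b < l - r by omega), Nat.cast_zero, mul_zero]
  · rw [Nat.choose_eq_zero_of_lt hr', Nat.cast_zero, mul_zero, zero_mul]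

lemma choose_add_mul_choose_eq_sum {a b l n r : ℕ} (hn : n + l = a + b) (hr : r ≤ l) :
    (n + r).choose r * b.choose (l - r)
      = ∑ m ∈ range (r + 1), a.choose m * b.choose (l - m) * (l - m).choose (r - m) := by
  rcases lt_or_ge b (l - r) with hb | hb
  · rw [Nat.choose_eq_zero_of_lt hb, mul_zero, eq_comm]
    refine sum_eq_zero fun m hm => ?_
    rw [Nat.choose_eq_zero_of_lt (show b < l - m by grind), mul_zero, zero_mul]
  rw [show n + r = a + (b - (l - r)) by omega, Nat.add_choose_eq,
    Nat.sum_antidiagonal_eq_sum_range_succ_mk, mul_comm, mul_sum]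
  refine sum_congr rfl fun m hmr => ?_
  have hm : m ≤ r := Nat.lt_succ_iff.mp (mem_range.mp hmr)
  rcases lt_or_ge b (l - m) with hbm | hbm
  · rw [Nat.choose_eq_zero_of_lt hbm, Nat.choose_eq_zero_of_lt (show b - (l - r) < r - m by omega)]
    simp
  have := Nat.choose_mul (n := b) (show l - r ≤ l - m by omega)
  rw [show l - m - (l - r) = r - m by omega,
    Nat.choose_symm_of_eq_add (show l - m = l - r + (r - m) by omega)] at this
  dsimp only
  rw [mul_assoc (a.choose m), this]
  ring

lemma neg_pow_mul_one_sub_pow {R : Type*} [CommRing R] (x : R) {m l : ℕ} (h : m ≤ l) :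
    (-x) ^ m * (1 - x) ^ (l - m) = (-1) ^ l * (x ^ m * (x - 1) ^ (l - m)) := by
  obtain ⟨k, rfl⟩ := Nat.exists_eq_add_of_le h
  rw [Nat.add_sub_cancel_left, show 1 - x = -(x - 1) by ring, neg_pow, neg_pow (x - 1), pow_add]
  ring

lemma Ffun_eq_sum {l a b : ℕ} (lam : ℚ) (hl : l ≤ a + b) :
    Ffun l a b lam = (-1) ^ l *
      ∑ m ∈ range (l + 1), a.choose m * b.choose (l - m) * (lam ^ m * (lam - 1) ^ (l - m)) := by
  set n := a + b - l
  have hn : n + l = a + b := by omega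
  have htop : (l : ℚ) - a - b - 1 = -n - 1 := by
    rw [Nat.cast_sub hl]; push_cast; ring
  calc Ffun l a b lam
      = ∑ r ∈ range (l + 1), ∑ m ∈ range (r + 1), (a.choose m * b.choose (l - m) : ℚ) *
          ((-lam) ^ (m + (r - m)) * (l - m).choose (r - m)) := by
        refine sum_congr rfl fun r hr => ?_
        have hvdm : ((n + r).choose r * b.choose (l - r) : ℚ) = ∑ m ∈ range (r + 1),
            (a.choose m * b.choose (l - m) * (l - m).choose (r - m) : ℚ) := by
          exact_mod_cast choose_add_mul_choose_eq_sum hn (Nat.lt_succ_iff.mp (mem_range.mp hr))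
        rw [htop, gchoose_neg_natCast_sub_one]
        calc lam ^ r * ((-1) ^ r * (n + r).choose r) * b.choose (l - r)
            = (-lam) ^ r * ((n + r).choose r * b.choose (l - r) : ℚ) := by rw [neg_pow lam]; ring
          _ = _ := by
            rw [hvdm, mul_sum]
            refine sum_congr rfl fun m hm => ?_
            rw [Nat.add_sub_cancel' (Nat.lt_succ_iff.mp (mem_range.mp hm))]
            ring
    _ = ∑ m ∈ range (l + 1), ∑ j ∈ range (l + 1 - m), (a.choose m * b.choose (l - m) : ℚ) *
          ((-lam) ^ (m + j) * (l - m).choose j) :=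
        sum_range_diag_flip (l + 1) fun m j => (a.choose m * b.choose (l - m) : ℚ) *
          ((-lam) ^ (m + j) * (l - m).choose j)
    _ = ∑ m ∈ range (l + 1), (a.choose m * b.choose (l - m) : ℚ) *
          ((-lam) ^ m * (1 - lam) ^ (l - m)) := by
        refine sum_congr rfl fun m hm => ?_
        rw [← mul_sum, show l + 1 - m = l - m + 1 by grind, sub_eq_neg_add, add_pow]
        simp only [pow_add, one_pow, mul_one, mul_sum, mul_assoc]
    _ = _ := by
        rw [mul_sum]
        refine sum_congr rfl fun m hm => ?_
        rw [neg_pow_mul_one_sub_pow lam (Nat.lt_succ_iff.mp (mem_range.mp hm))]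
        ring

lemma factorial_mul_descFactorial_mul_descFactorial {a b l n m : ℕ} (hn : n + l = a + b)
    (hml : m ≤ l) (hma : m ≤ a) :
    b ! * (n.descFactorial (a - m) * l.descFactorial m) = l ! * n ! * b.choose (l - m) := by
  rcases lt_or_ge b (l - m) with hb | hb
  · rw [Nat.choose_eq_zero_of_lt hb, Nat.descFactorial_eq_zero_iff_lt.mpr (by omega)]
    simp
  have hn' : (b - (l - m))! * n.descFactorial (a - m) = n ! := by
    rw [show b - (l - m) = n - (a - m) by omega]
    exact Nat.factorial_mul_descFactorial (by omega)
  rw [← hn', ← Nat.factorial_mul_descFactorial hml, ← Nat.choose_mul_factorial_mul_factorial hb]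
  ring

lemma factorial_mul_Qfun_natCast {l a b : ℕ} (lam : ℚ) (hl : l ≤ a + b) :
    b ! * Qfun l a b lam = l ! * (a + b - l)! *
      ∑ m ∈ range (l + 1), a.choose m * b.choose (l - m) * (lam ^ m * (lam - 1) ^ (l - m)) := by
  set n := a + b - l
  have hn : n + l = a + b := by omega
  have htop : (a : ℚ) + b - l = n := by
    rw [Nat.cast_sub hl]; push_cast; ring
  have hsub : range (min a l + 1) ⊆ range (l + 1) := range_subset_range.mpr (by omega)
  rw [Qfun, htop, mul_sum, mul_sum, ← sum_subset hsub fun m _ hm => ?_]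
  · refine sum_congr rfl fun m hm => ?_
    have hm : m ≤ a ∧ m ≤ l := by grind
    have key : (b ! * (n.descFactorial (a - m) * l.descFactorial m) : ℚ) =
        l ! * n ! * b.choose (l - m) := by
      exact_mod_cast factorial_mul_descFactorial_mul_descFactorial hn hm.2 hm.1
    rw [ffall_natCast, ffall_natCast]
    linear_combination (a.choose m * (lam ^ m * (lam - 1) ^ (l - m)) : ℚ) * key
  · rw [Nat.choose_eq_zero_of_lt (by grind), Nat.cast_zero]
    ring

section DescPochhammerShift

variable {R : Type*} [CommRing R] [IsDomain R]

lemma natDegree_descPochhammer_comp_X_add_C (n : ℕ) (t : R) :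
    ((descPochhammer R n).comp (X + C t)).natDegree = n := by
  rw [natDegree_comp, descPochhammer_natDegree, natDegree_X_add_C, mul_one]

lemma monic_descPochhammer_comp_X_add_C (n : ℕ) (t : R) :
    ((descPochhammer R n).comp (X + C t)).Monic :=
  (monic_descPochhammer R n).comp_X_add_C t

end DescPochhammerShift

noncomputable def Qpoly (l a : ℕ) (lam : ℚ) : ℚ[X] :=
  ∑ m ∈ range (min a l + 1),
    C (a.choose m * ffall l m * lam ^ m * (lam - 1) ^ (l - m)) *
      (descPochhammer ℚ (a - m)).comp (X + C ((a : ℚ) - l))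

lemma eval_Qpoly (l a : ℕ) (lam x : ℚ) : (Qpoly l a lam).eval x = Qfun l a x lam := by
  rw [Qpoly, eval_finsetSum, Qfun]
  refine sum_congr rfl fun m _ => ?_
  have hshift : (X + C ((a : ℚ) - l)).eval x = a + x - l := by
    rw [eval_add, eval_X, eval_C]; ring
  rw [eval_mul, eval_C, eval_comp, hshift, ffall_eq_eval_descPochhammer ((a : ℚ) + x - l)]
  ring

lemma natDegree_Qpoly_le (l a : ℕ) (lam : ℚ) : (Qpoly l a lam).natDegree ≤ a :=
  natDegree_sum_le_of_forall_le _ _ fun m _ =>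
    (natDegree_C_mul_le _ _).trans
      ((natDegree_descPochhammer_comp_X_add_C _ _).trans_le (Nat.sub_le a m))

lemma coeff_Qpoly (l a : ℕ) (lam : ℚ) : (Qpoly l a lam).coeff a = (lam - 1) ^ l := by
  rw [Qpoly, finsetSum_coeff, sum_eq_single_of_mem 0 (by simp)]
  · have hlead := (monic_descPochhammer_comp_X_add_C a ((a : ℚ) - l)).coeff_natDegree
    rw [natDegree_descPochhammer_comp_X_add_C] at hlead
    rw [coeff_C_mul, Nat.sub_zero a, hlead]
    simp [ffall]
  · intro m hm hm0
    rw [coeff_C_mul, coeff_eq_zero_of_natDegree_lt, mul_zero]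
    rw [natDegree_descPochhammer_comp_X_add_C]
    grind

/-- If `ℓ > a + b` then `F_{ℓ,a,b}(λ) = 0`; if `ℓ ≤ a + b` then
`F_{ℓ,a,b}(λ) = (-1)^ℓ b!/(ℓ! (a+b-ℓ)!) Q_{ℓ,a}(b,λ)`.  Moreover, for fixed
`ℓ, a, λ`, `b ↦ Q_{ℓ,a}(b,λ)` is a polynomial function of degree at most `a`
whose coefficient of `b^a` equals `(λ-1)^ℓ`. -/
theorem Ffun_eq_Qfun (l a b : ℕ) (lam : ℚ) :
    (a + b < l → Ffun l a b lam = 0) ∧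
    (l ≤ a + b → Ffun l a b lam =
      (-1 : ℚ) ^ l * (b.factorial : ℚ) / ((l.factorial : ℚ) * ((a + b - l).factorial : ℚ))
        * Qfun l a (b : ℚ) lam) ∧
    (∃ P : Polynomial ℚ, P.natDegree ≤ a ∧ P.coeff a = (lam - 1) ^ l ∧
      ∀ x : ℚ, P.eval x = Qfun l a x lam) := by
  refine ⟨Ffun_eq_zero_of_lt lam, fun hl => ?_,
    ⟨Qpoly l a lam, natDegree_Qpoly_le l a lam, coeff_Qpoly l a lam, eval_Qpoly l a lam⟩⟩
  have hfact : ((l ! * (a + b - l)! : ℕ) : ℚ) ≠ 0 := by positivity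
  rw [Ffun_eq_sum lam hl, mul_div_assoc, mul_assoc, div_mul_eq_mul_div,
    factorial_mul_Qfun_natCast lam hl, ← Nat.cast_mul, mul_div_cancel_left₀ _ hfact]
end

section
/- For every integer k ≥ 1, a^F_k(k) = F_{2k}, where a^F_k(k) denotes the defining formula for a^F_k evaluated at x = k, and F_n is the n-th Fibonacci number. -/
/-- The function `a^F_k(x)`. -/
def aF (k : ℕ) (x : ℚ) : ℚ :=
  (∑ p ∈ Finset.range (k + 1), (-1 : ℚ) ^ p * gchoose (x - 1 - p) p *
    ∑ r ∈ Finset.range (k - p + 1),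
      3 ^ r * gchoose (x - 1 - 2 * p) r * gchoose ((p : ℚ) + 1) ((k : ℤ) - p - r))
  + ∑ p ∈ Finset.Icc 1 k, (-1 : ℚ) ^ p * gchoose (x - 1 - p) ((p : ℤ) - 1) *
    ∑ r ∈ Finset.range (k - p + 1),
      3 ^ r * gchoose (x - 2 * p) r * gchoose ((p : ℚ) - 1) ((k : ℤ) - p - r)

lemma ffall_zero (x : ℚ) : ffall x 0 = 1 := by simp [ffall]

lemma ffall_succ (x : ℚ) (n : ℕ) : ffall x (n+1) = ffall x n * (x - n) := by
  simp [ffall, Finset.prod_range_succ]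

lemma ffall_nat (m n : ℕ) : ffall (m:ℚ) n = (m.descFactorial n : ℚ) := by
  induction n with
  | zero => simp [ffall]
  | succ n ih =>
    rw [ffall_succ, ih, Nat.descFactorial_succ]
    rcases le_or_gt m n with h | h
    · rw [Nat.sub_eq_zero_of_le h, zero_mul, Nat.cast_zero]
      rcases eq_or_lt_of_le h with rfl | h2
      · simp
      · rw [Nat.descFactorial_eq_zero_iff_lt.2 h2]; simp
    · have hle : n ≤ m := h.le
      push_cast [hle]
      ring

lemma gchoose_natCast_s19 (m n : ℕ) : gchoose (m:ℚ) (n:ℤ) = (m.choose n : ℚ) := by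
  rw [gchoose, if_pos (by positivity), Int.toNat_natCast, ffall_nat,
    Nat.descFactorial_eq_factorial_mul_choose]
  push_cast
  rw [mul_comm, mul_div_assoc, div_self (by positivity), mul_one]

lemma gchoose_zero (x : ℚ) : gchoose x 0 = 1 := by
  simp [gchoose, ffall_zero]

lemma gchoose_nat_int (m : ℕ) (n : ℤ) (h : 0 ≤ n) :
    gchoose (m:ℚ) n = (m.choose n.toNat : ℚ) := by
  obtain ⟨nn, rfl⟩ := Int.eq_ofNat_of_zero_le h
  rw [Int.toNat_natCast]
  exact gchoose_natCast_s19 m nn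

lemma gchoose_neg_one (n : ℕ) : gchoose (-1) (n:ℤ) = (-1)^n := by
  rw [gchoose, if_pos (by positivity), Int.toNat_natCast]
  have : ffall (-1) n = (-1)^n * (n.factorial : ℚ) := by
    induction n with
    | zero => simp [ffall_zero]
    | succ n ih => rw [ffall_succ, ih, Nat.factorial_succ]; push_cast; ring
  rw [this, mul_div_assoc, div_self (by positivity), mul_one]

lemma neg_one_sq_pow (m : ℕ) : ((-1:ℚ))^m * (-1)^m = 1 := by
  rw [← mul_pow]; norm_num

/- ### Fibonacci sum identity -/

def Saux (n : ℕ) : ℚ := ∑ p ∈ Finset.range (n+1), (-(1:ℚ)/9)^p * ((n-p).choose p : ℕ)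

lemma Saux_key (m : ℕ) : Saux (m+1)
    = (∑ i ∈ Finset.range (m+1), (-(1:ℚ)/9)^(i+1) * ((m - i).choose (i+1) : ℕ)) + 1 := by
  rw [Saux, Finset.sum_range_succ']
  simp only [pow_zero, Nat.sub_zero, Nat.choose_zero_right, Nat.cast_one, one_mul]
  congr 1
  apply Finset.sum_congr rfl
  intro i hi
  have h : m + 1 - (i + 1) = m - i := by omega
  rw [h]

lemma Saux_rec (n : ℕ) : Saux (n+2) = Saux (n+1) + (-(1:ℚ)/9) * Saux n := by
  have expand : Saux (n+2)
      = (∑ i ∈ Finset.range (n+1), (-(1:ℚ)/9)^(i+1) *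
          (((n - i).choose i : ℚ) + ((n - i).choose (i+1) : ℚ))) + 1 := by
    rw [Saux_key (n+1), Finset.sum_range_succ]
    have h0 : (n + 1 - (n + 1)).choose (n + 1 + 1) = 0 := by simp
    rw [h0]
    simp only [Nat.cast_zero, mul_zero, add_zero]
    congr 1
    apply Finset.sum_congr rfl
    intro i hi
    have hi' : i ≤ n := by have := Finset.mem_range.mp hi; omega
    have h1 : n + 1 - i = (n - i) + 1 := by omega
    rw [h1, Nat.choose_succ_succ]
    push_cast
    ring
  have split : ∑ i ∈ Finset.range (n+1), (-(1:ℚ)/9)^(i+1) *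
        (((n - i).choose i : ℚ) + ((n - i).choose (i+1) : ℚ))
      = (-(1:ℚ)/9) * Saux n
        + ∑ i ∈ Finset.range (n+1), (-(1:ℚ)/9)^(i+1) * ((n - i).choose (i+1) : ℚ) := by
    rw [Saux, Finset.mul_sum, ← Finset.sum_add_distrib]
    apply Finset.sum_congr rfl
    intro i hi
    ring
  have hkey := Saux_key n
  rw [expand, split]
  have : ∑ i ∈ Finset.range (n+1), (-(1:ℚ)/9)^(i+1) * ((n - i).choose (i+1) : ℚ)
      = Saux (n+1) - 1 := by rw [hkey]; ring
  rw [this]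
  ring

lemma Saux_fib (n : ℕ) : (3:ℚ)^n * Saux n = (Nat.fib (2*n+2) : ℚ) := by
  induction n using Nat.strong_induction_on with
  | _ n ih =>
    match n with
    | 0 =>
      have : Nat.fib 2 = 1 := rfl
      simp [Saux, this]
    | 1 =>
      have h4 : Nat.fib (2*1+2) = 3 := rfl
      rw [h4, Saux]
      rw [Finset.sum_range_succ, Finset.sum_range_succ, Finset.sum_range_zero]
      norm_num
    | (m+2) =>
      have h1 := ih (m+1) (by omega)
      have h0 := ih m (by omega)
      have hf : (Nat.fib (2*(m+2)+2) : ℚ) = 3 * Nat.fib (2*(m+1)+2) - Nat.fib (2*m+2) := by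
        have a := Nat.fib_add_two (n := 2*m+2)
        have b := Nat.fib_add_two (n := 2*m+3)
        have e1 : 2*m+2+2 = 2*m+4 := by ring
        have e2 : 2*m+3+2 = 2*m+5 := by ring
        have f1 : 2*m+2+1 = 2*m+3 := by ring
        have f2 : 2*m+3+1 = 2*m+4 := by ring
        have f3 : 2*m+4+1 = 2*m+5 := by ring
        rw [e1, f1] at a; rw [e2, f2] at b
        have c := Nat.fib_add_two (n := 2*m+4)
        have e3 : 2*m+4+2 = 2*m+6 := by ring
        rw [e3, f3] at c
        have e4 : 2*(m+2)+2 = 2*m+6 := by ring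
        have e5 : 2*(m+1)+2 = 2*m+4 := by ring
        rw [e4, e5]
        have key : Nat.fib (2*m+6) + Nat.fib (2*m+2) = 3 * Nat.fib (2*m+4) := by omega
        have := congrArg (Nat.cast : ℕ → ℚ) key
        push_cast at this
        linarith
      rw [Saux_rec m, hf, ← h1, ← h0]
      ring

lemma sum_eq_fib (n : ℕ) :
    ∑ p ∈ Finset.range (n+1), (-1:ℚ)^p * ((n-p).choose p : ℕ) * 3^(n-2*p)
      = (Nat.fib (2*n+2) : ℚ) := by
  rw [← Saux_fib n, Saux, Finset.mul_sum]
  apply Finset.sum_congr rfl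
  intro p hp
  rcases le_or_gt (2*p) n with h | h
  · have h3 : (3:ℚ)^n = 3^(n-2*p) * 9^p := by
      rw [show (9:ℚ) = 3^2 by norm_num, ← pow_mul, ← pow_add]
      congr 1
      omega
    have hq : (9:ℚ)^p * (-(1:ℚ)/9)^p = (-1)^p := by
      rw [← mul_pow]; norm_num
    rw [h3]
    linear_combination -(3:ℚ)^(n-2*p) * (((n-p).choose p : ℕ) : ℚ) * hq
  · have hc : (n-p).choose p = 0 := Nat.choose_eq_zero_of_lt (by omega)
    rw [hc]
    simp

/- ### Evaluating the terms of `aF` at `x = k` -/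

lemma term1_eval (n p : ℕ) (hp : p ≤ n) :
    (-1:ℚ)^p * gchoose ((n:ℚ) + 1 - 1 - p) p *
      ∑ r ∈ Finset.range (n + 1 - p + 1),
        3^r * gchoose ((n:ℚ) + 1 - 1 - 2*p) r * gchoose ((p:ℚ) + 1) ((n:ℤ) + 1 - p - r)
    = (-1:ℚ)^p * ((n-p).choose p : ℕ) * 3^(n-2*p) := by
  have e1 : (n:ℚ) + 1 - 1 - p = ((n-p:ℕ):ℚ) := by push_cast [hp]; ring
  rw [e1, gchoose_natCast_s19]
  rcases le_or_gt (2*p) n with h2 | h2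
  · have e2 : (n:ℚ) + 1 - 1 - 2*p = ((n-2*p:ℕ):ℚ) := by push_cast [h2]; ring
    rw [e2]
    congr 1
    rw [Finset.sum_eq_single_of_mem (n - 2*p) (Finset.mem_range.mpr (by omega)) ?side]
    · rw [gchoose_natCast_s19, Nat.choose_self]
      have e3 : (n:ℤ) + 1 - p - ((n - 2*p : ℕ):ℤ) = ((p+1 : ℕ):ℤ) := by omega
      have e4 : (p:ℚ) + 1 = ((p+1:ℕ):ℚ) := by push_cast; ring
      rw [e3, e4, gchoose_natCast_s19, Nat.choose_self]
      norm_num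
    case side =>
      intro r hr hne
      rcases lt_or_gt_of_ne hne with hlt | hgt
      · have hpos : (0:ℤ) ≤ (n:ℤ) + 1 - p - r := by omega
        have e4 : (p:ℚ) + 1 = ((p+1:ℕ):ℚ) := by push_cast; ring
        rw [e4, gchoose_nat_int _ _ hpos]
        have e5 : ((n:ℤ) + 1 - p - r).toNat = n + 1 - p - r := by omega
        rw [e5, Nat.choose_eq_zero_of_lt (by omega)]
        norm_num
      · rw [gchoose_natCast_s19, Nat.choose_eq_zero_of_lt hgt]
        norm_num
  · rw [Nat.choose_eq_zero_of_lt (by omega)]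
    norm_num

lemma term2_eval (n p : ℕ) (hp1 : 1 ≤ p) (hp2 : p ≤ n) :
    (-1:ℚ)^p * gchoose ((n:ℚ) + 1 - 1 - p) ((p:ℤ) - 1) *
      ∑ r ∈ Finset.range (n + 1 - p + 1),
        3^r * gchoose ((n:ℚ) + 1 - 2*p) r * gchoose ((p:ℚ) - 1) ((n:ℤ) + 1 - p - r) = 0 := by
  rcases le_or_gt (2*p) (n+1) with h2 | h2
  · have hz : (∑ r ∈ Finset.range (n + 1 - p + 1),
        3^r * gchoose ((n:ℚ) + 1 - 2*p) r * gchoose ((p:ℚ) - 1) ((n:ℤ) + 1 - p - r)) = 0 := by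
      apply Finset.sum_eq_zero
      intro r hr
      rcases le_or_gt r (n+1-2*p) with hle | hgt
      · have hpos : (0:ℤ) ≤ (n:ℤ) + 1 - p - r := by
          have := Finset.mem_range.mp hr; omega
        have e4 : (p:ℚ) - 1 = ((p-1:ℕ):ℚ) := by push_cast [hp1]; ring
        rw [e4, gchoose_nat_int _ _ hpos]
        have e5 : ((n:ℤ) + 1 - p - r).toNat = n + 1 - p - r := by omega
        rw [e5, Nat.choose_eq_zero_of_lt (by omega)]
        norm_num
      · have e2 : (n:ℚ) + 1 - 2*p = ((n+1-2*p:ℕ):ℚ) := by push_cast [h2]; ring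
        rw [e2, gchoose_natCast_s19, Nat.choose_eq_zero_of_lt (by omega)]
        norm_num
    rw [hz, mul_zero]
  · have e1 : (n:ℚ) + 1 - 1 - p = ((n-p:ℕ):ℚ) := by push_cast [hp2]; ring
    have hpos : (0:ℤ) ≤ (p:ℤ) - 1 := by omega
    rw [e1, gchoose_nat_int _ _ hpos]
    have e5 : ((p:ℤ) - 1).toNat = p - 1 := by omega
    rw [e5, Nat.choose_eq_zero_of_lt (by omega)]
    norm_num

lemma first_sum (n : ℕ) :
    ∑ p ∈ Finset.range (n+1+1), ((-1:ℚ)^p * gchoose ((n:ℚ) + 1 - 1 - p) p *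
      ∑ r ∈ Finset.range (n+1 - p + 1),
        3^r * gchoose ((n:ℚ) + 1 - 1 - 2*p) r * gchoose ((p:ℚ) + 1) ((n:ℤ) + 1 - p - r))
    = (∑ p ∈ Finset.range (n+1), (-1:ℚ)^p * ((n-p).choose p : ℕ) * 3^(n-2*p)) + 1 := by
  rw [Finset.sum_range_succ]
  congr 1
  · apply Finset.sum_congr rfl
    intro p hp
    exact term1_eval n p (by have := Finset.mem_range.mp hp; omega)
  · have hr : n + 1 - (n+1) + 1 = 1 := by omega
    rw [hr, Finset.sum_range_one]
    simp only [Nat.cast_zero, pow_zero]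
    have e1 : (n:ℚ) + 1 - 1 - ((n+1:ℕ):ℚ) = -1 := by push_cast; ring
    rw [e1, gchoose_neg_one]
    rw [gchoose_zero]
    have e3 : (n:ℤ) + 1 - ((n+1:ℕ):ℤ) - 0 = 0 := by push_cast; ring
    rw [e3, gchoose_zero]
    linear_combination neg_one_sq_pow (n+1)

lemma second_sum (n : ℕ) :
    ∑ p ∈ Finset.Icc 1 (n+1), ((-1:ℚ)^p * gchoose ((n:ℚ) + 1 - 1 - p) ((p:ℤ) - 1) *
      ∑ r ∈ Finset.range (n+1 - p + 1),
        3^r * gchoose ((n:ℚ) + 1 - 2*p) r * gchoose ((p:ℚ) - 1) ((n:ℤ) + 1 - p - r))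
    = -1 := by
  rw [Finset.sum_eq_single_of_mem (n+1) (Finset.mem_Icc.mpr ⟨by omega, le_refl _⟩) ?h]
  · have hr : n + 1 - (n+1) + 1 = 1 := by omega
    rw [hr, Finset.sum_range_one]
    simp only [Nat.cast_zero, pow_zero]
    have e1 : (n:ℚ) + 1 - 1 - ((n+1:ℕ):ℚ) = -1 := by push_cast; ring
    have e2 : ((n+1:ℕ):ℤ) - 1 = (n:ℤ) := by push_cast; ring
    rw [e1, e2, gchoose_neg_one]
    rw [gchoose_zero]
    have e3 : (n:ℤ) + 1 - ((n+1:ℕ):ℤ) - 0 = 0 := by push_cast; ring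
    rw [e3, gchoose_zero]
    linear_combination (-1:ℚ) * neg_one_sq_pow n
  case h =>
    intro p hp hne
    have h1 := Finset.mem_Icc.mp hp
    exact term2_eval n p h1.1 (by omega)

/-- For every `k ≥ 1`, `a^F_k(k) = F_{2k}`, the `2k`-th Fibonacci number. -/
theorem aF_diag_eq_fib (k : ℕ) (hk : 1 ≤ k) :
    aF k (k : ℚ) = (Nat.fib (2 * k) : ℚ) := by
  obtain ⟨n, rfl⟩ : ∃ n, k = n + 1 := ⟨k - 1, by omega⟩
  rw [aF]
  rw [show ((n+1:ℕ):ℚ) = (n:ℚ) + 1 from by push_cast; ring]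
  rw [show ((n+1:ℕ):ℤ) = (n:ℤ) + 1 from by push_cast; ring]
  rw [first_sum n, second_sum n, sum_eq_fib n]
  rw [show 2*(n+1) = 2*n+2 from by ring]
  ring
end
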